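/- If a set 𝒞 ⊆ ω^ω has a non-empty Σ¹₁ subset, then 𝒞 admits a Π⁰₁ modulus. More precisely, if R is a computable predicate such that 𝒟 = {X ∈ ω^ω : (∃Y ∈ ω^ω)(∀z) R(X↾z, Y↾z, z)} is a non-empty subset of 𝒞, and X, Y ∈ ω^ω satisfy (∀z) R(X↾z, Y↾z, z), then the function f defined by f(x) = max(X(x), Y(x)) is a Π⁰₁ modulus of 𝒞. -/

import Mathlib

namespace Paper

/-- Partial recursiveness relative to an oracle `O : ℕ → ℕ`:
the usual inductive definition of `Nat.Partrec` with an extra constructor for the oracle. -/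
inductive RecursiveIn (O : ℕ → ℕ) : (ℕ →. ℕ) → Prop
  | zero : RecursiveIn O (pure 0)
  | succ : RecursiveIn O Nat.succ
  | left : RecursiveIn O ↑fun n : ℕ => n.unpair.1
  | right : RecursiveIn O ↑fun n : ℕ => n.unpair.2
  | oracle : RecursiveIn O ↑O
  | pair {f g} : RecursiveIn O f → RecursiveIn O g →
      RecursiveIn O fun n => Nat.pair <$> f n <*> g n
  | comp {f g} : RecursiveIn O f → RecursiveIn O g →
      RecursiveIn O fun n => g n >>= f
  | prec {f g} : RecursiveIn O f → RecursiveIn O g →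
      RecursiveIn O (Nat.unpaired fun a n =>
        n.rec (f a) fun y IH => do let i ← IH; g (Nat.pair a (Nat.pair y i)))
  | rfind {f} : RecursiveIn O f →
      RecursiveIn O fun a => Nat.rfind fun n => (fun m => m = 0) <$> f (Nat.pair a n)

/-- `f : α →. σ` is partial recursive in the oracle `O`. -/
def PartrecIn (O : ℕ → ℕ) {α σ : Type} [Primcodable α] [Primcodable σ] (f : α →. σ) : Prop :=
  RecursiveIn O fun n =>
    Part.bind (Encodable.decode (α := α) n) fun a => (f a).map Encodable.encode

/-- `f : α → σ` is computable in the oracle `O`. -/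
def ComputableIn (O : ℕ → ℕ) {α σ : Type} [Primcodable α] [Primcodable σ] (f : α → σ) : Prop :=
  PartrecIn O (f : α →. σ)

/-- The characteristic function of a set of naturals, used as an oracle. -/
noncomputable def setOracle (X : Set ℕ) : ℕ → ℕ := by
  classical exact fun n => if n ∈ X then 1 else 0

/-- The initial segment `X↾n` of an element of Baire space, as a finite sequence. -/
def initSeg (X : ℕ → ℕ) (n : ℕ) : List ℕ := List.ofFn fun i : Fin n => X i

/-- `D ⊆ ω^ω` is a `O`-computably bounded `Π⁰₁(O)` class: `D = [T]` for an `O`-computable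
tree `T ⊆ ω^{<ω}` whose nodes are bounded by an `O`-computable function. -/
def IsCBPi01In (O : ℕ → ℕ) (D : Set (ℕ → ℕ)) : Prop :=
  ∃ T : List ℕ → Bool,
    ComputableIn O T ∧
    (∀ σ τ : List ℕ, τ <+: σ → T σ = true → T τ = true) ∧
    (∃ b : ℕ → ℕ, ComputableIn O b ∧
      ∀ σ : List ℕ, T σ = true → ∀ i : Fin σ.length, σ.get i ≤ b i.val) ∧
    D = {X | ∀ n : ℕ, T (initSeg X n) = true}

/-- `C ⊆ ω^ω` is `Π⁰₁` encodable: every infinite `X ⊆ ω` has an infinite subset `Y`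
such that `C` admits a non-empty `Y`-computably bounded `Π⁰₁(Y)` subset. -/
def Pi01Encodable (C : Set (ℕ → ℕ)) : Prop :=
  ∀ X : Set ℕ, X.Infinite →
    ∃ Y : Set ℕ, Y ⊆ X ∧ Y.Infinite ∧
      ∃ D : Set (ℕ → ℕ), D.Nonempty ∧ D ⊆ C ∧ IsCBPi01In (setOracle Y) D

/-- `f` is a `Π⁰₁` modulus of `C`: for every `g ≥ f`, `C` has a non-empty
`g`-computably bounded `Π⁰₁(g)` subset. -/
def IsPi01Modulus (f : ℕ → ℕ) (C : Set (ℕ → ℕ)) : Prop :=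
  ∀ g : ℕ → ℕ, (∀ n, f n ≤ g n) →
    ∃ D : Set (ℕ → ℕ), D.Nonempty ∧ D ⊆ C ∧ IsCBPi01In g D

/-- `D ⊆ ω^ω` is `Σ¹₁(O)`. -/
def IsSigma11In (O : ℕ → ℕ) (D : Set (ℕ → ℕ)) : Prop :=
  ∃ R : List ℕ × List ℕ × ℕ → Bool,
    ComputableIn O R ∧
    D = {X | ∃ Y : ℕ → ℕ, ∀ z : ℕ, R (initSeg X z, initSeg Y z, z) = true}

/-- `D ⊆ ω^ω` is `Σ¹₁`. -/
def IsSigma11 (D : Set (ℕ → ℕ)) : Prop :=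
  ∃ R : List ℕ × List ℕ × ℕ → Bool,
    Computable R ∧
    D = {X | ∃ Y : ℕ → ℕ, ∀ z : ℕ, R (initSeg X z, initSeg Y z, z) = true}

/-- `A ∈ ω^ω` is computably encodable. -/
def ComputablyEncodable (A : ℕ → ℕ) : Prop :=
  ∀ X : Set ℕ, X.Infinite →
    ∃ Y : Set ℕ, Y ⊆ X ∧ Y.Infinite ∧ ComputableIn (setOracle Y) A

/-- `f` is a modulus of `A`: every `g ≥ f` computes `A`. -/
def IsModulus (f : ℕ → ℕ) (A : ℕ → ℕ) : Prop :=
  ∀ g : ℕ → ℕ, (∀ n, f n ≤ g n) → ComputableIn g A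

/-- The cylinder `[σ]` of elements of Baire space extending `σ`. -/
def cyl (σ : List ℕ) : Set (ℕ → ℕ) := {X | initSeg X σ.length = σ}

/-!
For `g ≥ max X Y` let `T_g` be the tree of those `σ` bounded by `g` for which some `Y' ≤ g`
satisfies `R (σ↾z, Y'↾z, z)` for all `z ≤ |σ|`. Deciding `σ ∈ T_g` is a search over the finitely
many candidates `Y'↾|σ| ≤ g↾|σ|`, so `T_g` is `g`-computable and `g`-bounded. The witnesses `X, Y`
show that `X` is a path. If `Z` is a path, the sets of `Y' ≤ g` that work for `Z↾n` are closed and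
decreasing in the compact space `∏ i, [0, g i]`, so some `Y'` works for every `n`, and `Z` lies
in the `Σ¹₁` set, hence in `𝒞`.
-/

open Encodable Denumerable

section InitialSegments

@[simp]
theorem length_initSeg (X : ℕ → ℕ) (n : ℕ) : (initSeg X n).length = n := by
  simp [initSeg]

theorem getD_initSeg {X : ℕ → ℕ} {n i : ℕ} (h : i < n) : (initSeg X n).getD i 0 = X i := by
  simp [initSeg, h]

@[simp]
theorem getElem_initSeg (X : ℕ → ℕ) {n i : ℕ} (h : i < (initSeg X n).length) :
    (initSeg X n)[i] = X i := by
  simp [initSeg]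

theorem initSeg_succ (X : ℕ → ℕ) (n : ℕ) : initSeg X (n + 1) = initSeg X n ++ [X n] := by
  rw [initSeg, List.ofFn_succ']
  simp [initSeg]

theorem take_initSeg {X : ℕ → ℕ} {z n : ℕ} (h : z ≤ n) : (initSeg X n).take z = initSeg X z :=
  List.ext_getElem (by simp [h]) fun i _ _ => by simp [initSeg]

theorem initSeg_getD_eq_take {τ : List ℕ} {z : ℕ} (h : z ≤ τ.length) :
    initSeg (fun i => τ.getD i 0) z = τ.take z :=
  List.ext_getElem (by simp [h]) fun i hi _ => by
    rw [length_initSeg] at hi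
    simp [initSeg, List.getElem?_eq_getElem (show i < τ.length by omega)]

theorem _root_.Nat.pair_le_pair {a₁ a₂ b₁ b₂ : ℕ} (ha : a₁ ≤ a₂) (hb : b₁ ≤ b₂) :
    Nat.pair a₁ b₁ ≤ Nat.pair a₂ b₂ := by
  obtain ha | rfl := ha.lt_or_eq
  · obtain hb | rfl := hb.lt_or_eq
    · exact ((Nat.pair_lt_pair_left _ ha).trans (Nat.pair_lt_pair_right _ hb)).le
    · exact (Nat.pair_lt_pair_left _ ha).le
  · obtain hb | rfl := hb.lt_or_eq
    · exact (Nat.pair_lt_pair_right _ hb).le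
    · exact le_rfl

theorem monotone_encode_initSeg (n : ℕ) : Monotone fun X : ℕ → ℕ => encode (initSeg X n) := by
  intro X Y h
  induction n generalizing X Y with
  | zero => rfl
  | succ n ih =>
    simp only [initSeg, List.ofFn_succ, encode_list_cons]
    exact Nat.succ_le_succ (Nat.pair_le_pair (h 0) (ih fun i => h (i + 1)))

end InitialSegments

namespace RecursiveIn

variable {O : ℕ → ℕ}

theorem of_eq {f g : ℕ →. ℕ} (hf : RecursiveIn O f) (H : ∀ n, f n = g n) : RecursiveIn O g :=
  funext H ▸ hf

theorem of_partrec {f : ℕ →. ℕ} (hf : Nat.Partrec f) : RecursiveIn O f := by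
  induction hf with
  | zero => exact .zero
  | succ => exact .succ
  | left => exact .left
  | right => exact .right
  | pair _ _ ih₁ ih₂ => exact .pair ih₁ ih₂
  | comp _ _ ih₁ ih₂ => exact .comp ih₁ ih₂
  | prec _ _ ih₁ ih₂ => exact .prec ih₁ ih₂
  | rfind _ ih => exact .rfind ih

theorem of_computable {f : ℕ → ℕ} (hf : Computable f) : RecursiveIn O f :=
  of_partrec (Partrec.nat_iff.1 hf.partrec)

theorem comp_total {f : ℕ →. ℕ} {g : ℕ → ℕ} (hf : RecursiveIn O f) (hg : RecursiveIn O g) :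
    RecursiveIn O fun n => f (g n) :=
  (RecursiveIn.comp hf hg).of_eq fun n => by simp only [PFun.coe_val]; exact Part.bind_some _ _

theorem pair_total {f g : ℕ → ℕ} (hf : RecursiveIn O f) (hg : RecursiveIn O g) :
    RecursiveIn O (fun n => Nat.pair (f n) (g n) : ℕ → ℕ) :=
  (RecursiveIn.pair hf hg).of_eq fun n => by simp [PFun.coe_val, Seq.seq]

end RecursiveIn

theorem recursiveIn_encode_initSeg (O : ℕ → ℕ) :
    RecursiveIn O (fun n => encode (initSeg O n) : ℕ → ℕ) := by
  have happend : Computable fun m : ℕ => encode (ofNat (List ℕ) m.unpair.2 ++ [m.unpair.1]) :=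
    Computable.encode.comp <| Computable.list_concat.comp
      ((Computable.ofNat _).comp (Computable.snd.comp Computable.unpair))
      (Computable.fst.comp Computable.unpair)
  -- the step of `prec` receives `pair a (pair y (encode (initSeg O y)))`
  have hquery : RecursiveIn O (fun m => Nat.pair (O m.unpair.2.unpair.1) m.unpair.2.unpair.2 :
      ℕ → ℕ) :=
    RecursiveIn.pair_total
      (RecursiveIn.oracle.comp_total (RecursiveIn.of_computable
        (Computable.fst.comp (Computable.unpair.comp (Computable.snd.comp Computable.unpair)))))
      (RecursiveIn.of_computable
        (Computable.snd.comp (Computable.unpair.comp (Computable.snd.comp Computable.unpair))))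
  have hrec : ∀ n : ℕ, (Nat.rec (Part.some 0) (fun y IH => IH.bind fun i =>
      Part.some (encode (ofNat (List ℕ) i ++ [O y]))) n : Part ℕ) =
      Part.some (encode (initSeg O n)) := by
    intro n
    induction n with
    | zero => rfl
    | succ n ih => simp [ih, initSeg_succ]
  have hprec := RecursiveIn.prec .zero ((RecursiveIn.of_computable happend).comp_total hquery)
  refine (hprec.comp_total (RecursiveIn.of_computable
    (Primrec₂.natPair.to_comp.comp (Computable.const 0) Computable.id))).of_eq fun n => ?_
  simpa [PFun.coe_val, Nat.unpaired, Pure.pure, PFun.pure] using hrec n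

theorem computableIn_self (O : ℕ → ℕ) : ComputableIn O O :=
  RecursiveIn.oracle.of_eq fun n => by simp [PFun.coe_val]

theorem computableIn_of_computable_initSeg {O : ℕ → ℕ} {α β : Type} [Primcodable α]
    [Primcodable β] {F : α → List ℕ → β} {ℓ : α → ℕ} (hF : Computable₂ F) (hℓ : Computable ℓ) :
    ComputableIn O fun a => F a (initSeg O (ℓ a)) := by
  have hℓ' : Computable fun n : ℕ => ((decode (α := α) n).map ℓ).getD 0 :=
    Computable.option_getD (Computable.option_map Computable.decode (hℓ.comp Computable.snd).to₂)
      (Computable.const 0)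
  have hquery : RecursiveIn O (fun n =>
      Nat.pair n (encode (initSeg O (((decode (α := α) n).map ℓ).getD 0))) : ℕ → ℕ) :=
    (RecursiveIn.of_computable Computable.id).pair_total
      ((recursiveIn_encode_initSeg O).comp_total (RecursiveIn.of_computable hℓ'))
  refine ((RecursiveIn.of_partrec hF).comp_total hquery).of_eq fun n => ?_
  cases h : decode (α := α) n <;> simp [h, PFun.coe_val]

section BoundedQuantifiers

variable {α : Type*} [Primcodable α]

theorem _root_.Computable.decide_and {P Q : α → Prop} [DecidablePred P] [DecidablePred Q]
    (hP : Computable fun a => decide (P a)) (hQ : Computable fun a => decide (Q a)) :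
    Computable fun a => decide (P a ∧ Q a) :=
  (Primrec.and.to_comp.comp hP hQ).of_eq fun a => by simp

variable {P : α → ℕ → Prop} [∀ a k, Decidable (P a k)] {b : α → ℕ}

theorem _root_.Computable.decide_exists_lt (hP : Computable₂ fun a k => decide (P a k))
    (hb : Computable b) : Computable fun a => decide (∃ k < b a, P a k) := by
  refine (Computable.nat_rec hb (Computable.const false) (Primrec.or.to_comp.comp
    (Computable.snd.comp Computable.snd)
    (hP.comp Computable.fst (Computable.fst.comp Computable.snd))).to₂).of_eq fun a => ?_
  induction b a with
  | zero => simp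
  | succ n ih => simp [ih, Nat.le_iff_lt_or_eq, or_and_right, exists_or]

theorem _root_.Computable.decide_forall_lt (hP : Computable₂ fun a k => decide (P a k))
    (hb : Computable b) : Computable fun a => decide (∀ k < b a, P a k) :=
  (Primrec.not.to_comp.comp (Computable.decide_exists_lt (P := fun a k => ¬ P a k)
    ((Primrec.not.to_comp.comp hP).of_eq fun _ => by simp) hb)).of_eq fun a => by
      rw [← decide_not]
      simp

end BoundedQuantifiers

section Compactness

theorem isClosed_setOf_initSeg (n : ℕ) (S : List ℕ → Prop) :
    IsClosed {Y : ℕ → ℕ | S (initSeg Y n)} := by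
  have hrestrict : Continuous fun Y : ℕ → ℕ => fun i : Fin n => Y i :=
    continuous_pi fun i => continuous_apply (i : ℕ)
  exact (isClosed_discrete {v : Fin n → ℕ | S (List.ofFn v)}).preimage hrestrict

/-- Kőnig's lemma, as compactness of `Set.Iic g = ∏ i, [0, g i]`. -/
theorem exists_forall_initSeg_of_forall_exists {g : ℕ → ℕ} {P : ℕ → List ℕ → Prop}
    (h : ∀ n, ∃ Y ≤ g, ∀ z ≤ n, P z (initSeg Y z)) : ∃ Y ≤ g, ∀ z, P z (initSeg Y z) := by
  have hK : IsCompact (Set.Iic g) :=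
    Set.pi_univ_Iic g ▸ isCompact_univ_pi fun i => (Set.finite_Iic (g i)).isCompact
  have hclosed : ∀ n, IsClosed {Y : ℕ → ℕ | ∀ z ≤ n, P z (initSeg Y z)} := fun n => by
    simp only [Set.ofPred_forall]
    exact isClosed_iInter fun z => isClosed_iInter fun _ => isClosed_setOf_initSeg z (P z)
  obtain ⟨Y, hY⟩ := IsCompact.nonempty_iInter_of_sequence_nonempty_isCompact_isClosed
    (fun n => Set.Iic g ∩ {Y | ∀ z ≤ n, P z (initSeg Y z)})
    (fun n => Set.inter_subset_inter_right _ fun Y hY z hz => hY z (hz.trans n.le_succ))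
    h (hK.inter_right (hclosed 0)) (fun n => hK.isClosed.inter (hclosed n))
  simp only [Set.mem_iInter, Set.mem_inter_iff, Set.mem_Iic] at hY
  exact ⟨Y, (hY 0).1, fun z => (hY z).2 z le_rfl⟩

end Compactness

section Sigma11Tree

variable (R : List ℕ × List ℕ × ℕ → Bool)

/-- The tree `T_g` of the paper. -/
def sigma11Tree (g : ℕ → ℕ) (σ : List ℕ) : Prop :=
  (∀ i : Fin σ.length, σ.get i ≤ g i) ∧
    ∃ Y ≤ g, ∀ z ≤ σ.length, R (σ.take z, initSeg Y z, z) = true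

def DominatedBy (σ L : List ℕ) : Prop :=
  ∀ i < σ.length, σ.getD i 0 ≤ L.getD i 0

instance : DecidableRel DominatedBy := fun σ L =>
  inferInstanceAs (Decidable (∀ i < σ.length, σ.getD i 0 ≤ L.getD i 0))

/-- Decides `sigma11Tree R g σ` from `L = g↾|σ|`: a witness `Y↾|σ|` is dominated by `L`, so its
code is at most `encode L`. -/
def sigma11TreeCode (σ L : List ℕ) : Bool :=
  decide (DominatedBy σ L ∧ ∃ k < encode L + 1,
    (ofNat (List ℕ) k).length = σ.length ∧ DominatedBy (ofNat (List ℕ) k) L ∧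
      ∀ z < σ.length + 1, R (σ.take z, (ofNat (List ℕ) k).take z, z) = true)

variable {R}

theorem computable_decide_dominatedBy : Computable₂ fun σ L => decide (DominatedBy σ L) := by
  have hle : Computable₂ fun (p : List ℕ × List ℕ) i => decide (p.1.getD i 0 ≤ p.2.getD i 0) :=
    (Primrec.nat_le.decide.comp
      ((Primrec.list_getD 0).comp (Primrec.fst.comp Primrec.fst) Primrec.snd)
      ((Primrec.list_getD 0).comp (Primrec.snd.comp Primrec.fst) Primrec.snd)).to_comp
  exact Computable.decide_forall_lt hle (Computable.list_length.comp Computable.fst)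

theorem computable_sigma11TreeCode (hR : Computable R) : Computable₂ (sigma11TreeCode R) := by
  have hτ : Computable fun q : (List ℕ × List ℕ) × ℕ => ofNat (List ℕ) q.2 :=
    (Computable.ofNat _).comp Computable.snd
  have hσ : Computable fun q : (List ℕ × List ℕ) × ℕ => q.1.1 :=
    Computable.fst.comp Computable.fst
  have hL : Computable fun q : (List ℕ × List ℕ) × ℕ => q.1.2 :=
    Computable.snd.comp Computable.fst
  have hRz : Computable₂ fun (q : (List ℕ × List ℕ) × ℕ) z =>
      decide (R (q.1.1.take z, (ofNat (List ℕ) q.2).take z, z) = true) :=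
    (hR.comp ((Primrec.list_take.to_comp.comp Computable.snd (hσ.comp Computable.fst)).pair
      ((Primrec.list_take.to_comp.comp Computable.snd (hτ.comp Computable.fst)).pair
        Computable.snd))).of_eq fun _ => by simp
  have hwitness := Computable.decide_and
    ((Primrec.eq.decide.to_comp.comp (Computable.list_length.comp hτ)
      (Computable.list_length.comp hσ)))
    (Computable.decide_and (computable_decide_dominatedBy.comp hτ hL)
      (Computable.decide_forall_lt hRz (Computable.succ.comp (Computable.list_length.comp hσ))))
  exact Computable.decide_and (computable_decide_dominatedBy.comp Computable.fst Computable.snd)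
    (Computable.decide_exists_lt hwitness.to₂
      (Computable.succ.comp (Computable.encode.comp Computable.snd)))

variable {g : ℕ → ℕ}

theorem dominatedBy_initSeg_iff {σ : List ℕ} {n : ℕ} (h : σ.length ≤ n) :
    DominatedBy σ (initSeg g n) ↔ ∀ i : Fin σ.length, σ.get i ≤ g i := by
  simp only [DominatedBy, Fin.forall_iff, List.get_eq_getElem]
  refine forall₂_congr fun i hi => ?_
  rw [getD_initSeg (hi.trans_le h), List.getD_eq_getElem _ _ hi]

theorem sigma11TreeCode_initSeg_iff (σ : List ℕ) :
    sigma11TreeCode R σ (initSeg g σ.length) = true ↔ sigma11Tree R g σ := by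
  simp only [sigma11TreeCode, decide_eq_true_eq, sigma11Tree, dominatedBy_initSeg_iff le_rfl,
    Nat.lt_succ_iff]
  refine and_congr_right fun _ => ⟨?_, ?_⟩
  · rintro ⟨k, -, hlen, hdom, hR⟩
    set τ := ofNat (List ℕ) k
    rw [dominatedBy_initSeg_iff hlen.le] at hdom
    refine ⟨fun i => τ.getD i 0, fun i => ?_, fun z hz => ?_⟩
    · show τ.getD i 0 ≤ g i
      by_cases hi : i < τ.length
      · rw [List.getD_eq_getElem _ _ hi]
        exact hdom ⟨i, hi⟩
      · rw [List.getD_eq_default _ _ (not_lt.1 hi)]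
        exact Nat.zero_le _
    · rw [initSeg_getD_eq_take (hlen ▸ hz)]
      exact hR z hz
  · rintro ⟨Y, hY, hR⟩
    refine ⟨encode (initSeg Y σ.length), monotone_encode_initSeg _ hY, ?_⟩
    rw [ofNat_encode, dominatedBy_initSeg_iff (by simp)]
    refine ⟨by simp, fun i => ?_, fun z hz => ?_⟩
    · simpa using hY i
    · rw [take_initSeg hz]
      exact hR z hz

theorem sigma11Tree.of_isPrefix {σ τ : List ℕ} (hτσ : τ <+: σ) (hσ : sigma11Tree R g σ) :
    sigma11Tree R g τ := by
  obtain ⟨hbound, Y, hY, hR⟩ := hσ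
  have hlen := hτσ.length_le
  obtain ⟨ρ, rfl⟩ := hτσ
  refine ⟨fun i => ?_, Y, hY, fun z hz => ?_⟩
  · simpa [List.getElem_append_left i.isLt] using hbound ⟨i, by omega⟩
  · simpa [List.take_append_of_le_length hz] using hR z (by omega)

theorem sigma11Tree_initSeg {X Y : ℕ → ℕ} (hX : X ≤ g) (hY : Y ≤ g)
    (hXY : ∀ z, R (initSeg X z, initSeg Y z, z) = true) (n : ℕ) :
    sigma11Tree R g (initSeg X n) := by
  refine ⟨fun i => ?_, Y, hY, fun z hz => ?_⟩
  · simpa using hX i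
  · rw [take_initSeg (by simpa using hz)]
    exact hXY z

theorem exists_forall_of_sigma11Tree_initSeg {Z : ℕ → ℕ}
    (hZ : ∀ n, sigma11Tree R g (initSeg Z n)) :
    ∃ Y, ∀ z, R (initSeg Z z, initSeg Y z, z) = true := by
  obtain ⟨Y, -, hY⟩ := exists_forall_initSeg_of_forall_exists
      (P := fun z τ => R (initSeg Z z, τ, z) = true) fun n => by
    obtain ⟨-, Y, hY, hR⟩ := hZ n
    exact ⟨Y, hY, fun z hz => by simpa [take_initSeg hz] using hR z (by simpa using hz)⟩
  exact ⟨Y, hY⟩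

theorem isCBPi01In_sigma11Tree (hR : Computable R) (g : ℕ → ℕ) :
    IsCBPi01In g {Z | ∀ n, sigma11Tree R g (initSeg Z n)} := by
  refine ⟨fun σ => sigma11TreeCode R σ (initSeg g σ.length),
    computableIn_of_computable_initSeg (computable_sigma11TreeCode hR) Computable.list_length,
    fun σ τ hτσ hσ => ?_, ⟨g, computableIn_self g, fun σ hσ => ?_⟩, ?_⟩
  · rw [sigma11TreeCode_initSeg_iff] at hσ ⊢
    exact hσ.of_isPrefix hτσ
  · exact ((sigma11TreeCode_initSeg_iff σ).1 hσ).1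
  · simp only [sigma11TreeCode_initSeg_iff]

end Sigma11Tree

theorem isPi01Modulus_max {C : Set (ℕ → ℕ)} {R : List ℕ × List ℕ × ℕ → Bool} (hR : Computable R)
    (hC : {X : ℕ → ℕ | ∃ Y : ℕ → ℕ, ∀ z, R (initSeg X z, initSeg Y z, z) = true} ⊆ C)
    {X Y : ℕ → ℕ} (hXY : ∀ z, R (initSeg X z, initSeg Y z, z) = true) :
    IsPi01Modulus (fun x => max (X x) (Y x)) C := fun g hg =>
  ⟨{Z | ∀ n, sigma11Tree R g (initSeg Z n)},
    ⟨X, sigma11Tree_initSeg (fun i => (le_max_left _ _).trans (hg i))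
      (fun i => (le_max_right _ _).trans (hg i)) hXY⟩,
    fun _ hZ => hC (exists_forall_of_sigma11Tree_initSeg hZ),
    isCBPi01In_sigma11Tree hR g⟩

/-- If `C ⊆ ω^ω` has a non-empty `Σ¹₁` subset then `C` admits a `Π⁰₁`
modulus; more precisely, if `R` is a computable predicate with
`{X | ∃ Y ∀ z, R (X↾z) (Y↾z) z} ⊆ C` and `X, Y` satisfy `∀ z, R (X↾z) (Y↾z) z`, then
`f x = max (X x) (Y x)` is a `Π⁰₁` modulus of `C`. -/
theorem pi01Modulus_of_sigma11_subset :
    (∀ C : Set (ℕ → ℕ),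
      (∃ D : Set (ℕ → ℕ), D.Nonempty ∧ D ⊆ C ∧ IsSigma11 D) →
      ∃ f : ℕ → ℕ, IsPi01Modulus f C) ∧
    (∀ (C : Set (ℕ → ℕ)) (R : List ℕ × List ℕ × ℕ → Bool),
      Computable R →
      {X : ℕ → ℕ | ∃ Y : ℕ → ℕ, ∀ z : ℕ, R (initSeg X z, initSeg Y z, z) = true} ⊆ C →
      ∀ X Y : ℕ → ℕ, (∀ z : ℕ, R (initSeg X z, initSeg Y z, z) = true) →
        IsPi01Modulus (fun x => max (X x) (Y x)) C) := by
  refine ⟨?_, fun C R hR hC X Y hXY => isPi01Modulus_max hR hC hXY⟩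
  rintro C ⟨_, ⟨X, hX⟩, hDC, R, hR, rfl⟩
  obtain ⟨Y, hXY⟩ := hX
  exact ⟨_, isPi01Modulus_max hR hDC hXY⟩

end Paper
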